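/- arXiv:2401.06576 — 2 statements merged into one kernel-verified Lean document; each statement's English description precedes it below -/
import Mathlib

section
/- Let J be a 2×2 real matrix with eigenvalues 0 < λ₁ ≤ λ₂ (or λ₁ ≤ λ₂ < 0) and eigenvectors r₁, r₂ (assume J diagonalizable with linearly independent r₁, r₂ if λ₁ = λ₂), and let v(x) = Jx. Define s(x) = arctan( det(x, r₁)^(−λ₁) · det(x, r₂)^(λ₂) ) with signed powers p^q = sign(p)|p|^q. Then on the open set where det(x,r₁) ≠ 0 and det(x,r₂) ≠ 0, s is differentiable and v(x)ᵀ∇s(x) = 0. -/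
/-!
Writing `x = a r₁ + b r₂` gives `J x = a λ₁ r₁ + b λ₂ r₂`, so `det(J x, r₁) = λ₂ det(x, r₁)` and
`det(J x, r₂) = λ₁ det(x, r₂)`. Since `d(p^q) = q p^q dp / p` for signed powers, the derivative of
`det(x, r₁)^(-λ₁) · det(x, r₂)^(λ₂)` along `J x` is `(-λ₁ λ₂ + λ₂ λ₁)` times the product, i.e. zero.
-/

/-- Signed power p^q := sign(p)·|p|^q. -/
noncomputable def spow (p q : ℝ) : ℝ := Real.sign p * |p| ^ q

/-- 2×2 determinant of the matrix with columns u and v. -/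
def det2 (u v : ℝ × ℝ) : ℝ := u.1 * v.2 - u.2 * v.1

open Topology Module

theorem exists_smul_add_smul_eq_of_linearIndependent {K V : Type*} [DivisionRing K]
    [AddCommGroup V] [Module K V] (hV : finrank K V = 2) {r₁ r₂ : V}
    (hind : LinearIndependent K ![r₁, r₂]) (x : V) : ∃ a b : K, a • r₁ + b • r₂ = x := by
  have hspan := hind.span_eq_top_of_card_eq_finrank (by simp [hV])
  rw [Matrix.range_cons, Matrix.range_cons, Matrix.range_empty, Set.union_empty,
    Set.singleton_union] at hspan
  exact Submodule.mem_span_pair.mp (hspan ▸ Submodule.mem_top)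

theorem det2_map_left_of_eigenvectors (J : (ℝ × ℝ) →ₗ[ℝ] (ℝ × ℝ)) {l₁ l₂ : ℝ} {r₁ r₂ : ℝ × ℝ}
    (hind : LinearIndependent ℝ ![r₁, r₂]) (he₁ : J r₁ = l₁ • r₁) (he₂ : J r₂ = l₂ • r₂)
    (x : ℝ × ℝ) : det2 (J x) r₁ = l₂ * det2 x r₁ := by
  obtain ⟨a, b, rfl⟩ := exists_smul_add_smul_eq_of_linearIndependent (by simp) hind x
  simp only [map_add, map_smul, he₁, he₂, det2, Prod.fst_add, Prod.snd_add, Prod.smul_fst,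
    Prod.smul_snd, smul_eq_mul]
  ring

theorem hasDerivAt_spow (q : ℝ) {p : ℝ} (hp : p ≠ 0) :
    HasDerivAt (fun t => spow t q) (q * spow p q / p) p := by
  rcases hp.lt_or_gt with hp | hp
  · have heq : (fun t => spow t q) =ᶠ[𝓝 p] fun t => -(-t) ^ q := by
      filter_upwards [eventually_lt_nhds hp] with t ht
      rw [spow, Real.sign_of_neg ht, abs_of_neg ht, neg_one_mul]
    have h := ((Real.hasDerivAt_rpow_const (p := q) (Or.inl (neg_ne_zero.mpr hp.ne))).comp p
      (hasDerivAt_neg p)).neg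
    refine (h.congr_of_eventuallyEq heq).congr_deriv ?_
    rw [spow, Real.sign_of_neg hp, abs_of_neg hp, Real.rpow_sub_one (neg_ne_zero.mpr hp.ne)]
    field_simp
  · have heq : (fun t => spow t q) =ᶠ[𝓝 p] fun t => t ^ q := by
      filter_upwards [eventually_gt_nhds hp] with t ht
      rw [spow, Real.sign_of_pos ht, abs_of_pos ht, one_mul]
    refine ((Real.hasDerivAt_rpow_const (Or.inl hp.ne')).congr_of_eventuallyEq heq).congr_deriv ?_
    rw [spow, Real.sign_of_pos hp, abs_of_pos hp, one_mul, Real.rpow_sub_one hp.ne', mul_div_assoc]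

theorem HasFDerivAt.spow {E : Type*} [NormedAddCommGroup E] [NormedSpace ℝ E] {f : E → ℝ}
    {f' : E →L[ℝ] ℝ} {x : E} (q : ℝ) (hf : HasFDerivAt f f' x) (hx : f x ≠ 0) :
    HasFDerivAt (fun y => spow (f y) q) ((q * spow (f x) q / f x) • f') x :=
  (hasDerivAt_spow q hx).comp_hasFDerivAt x hf

def det2Left (r : ℝ × ℝ) : ℝ × ℝ →L[ℝ] ℝ :=
  r.2 • ContinuousLinearMap.fst ℝ ℝ ℝ - r.1 • ContinuousLinearMap.snd ℝ ℝ ℝ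

@[simp]
theorem det2Left_apply (r u : ℝ × ℝ) : det2Left r u = det2 u r := by
  simp [det2Left, det2, mul_comm]

theorem hasFDerivAt_det2_left (r x : ℝ × ℝ) : HasFDerivAt (fun y => det2 y r) (det2Left r) x := by
  convert (det2Left r).hasFDerivAt (x := x) using 1
  exact funext fun y => (det2Left_apply r y).symm

theorem stmt5_general (J : (ℝ × ℝ) →ₗ[ℝ] (ℝ × ℝ)) (l1 l2 : ℝ) (r1 r2 : ℝ × ℝ)
    (hind : LinearIndependent ℝ ![r1, r2])
    (he1 : J r1 = l1 • r1) (he2 : J r2 = l2 • r2)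
    (s : ℝ × ℝ → ℝ)
    (hs : ∀ x, s x = Real.arctan (spow (det2 x r1) (-l1) * spow (det2 x r2) l2))
    (x : ℝ × ℝ) (hx1 : det2 x r1 ≠ 0) (hx2 : det2 x r2 ≠ 0) :
    DifferentiableAt ℝ s x ∧ fderiv ℝ s x (J x) = 0 := by
  obtain rfl := funext hs
  have hJ1 := det2_map_left_of_eigenvectors J hind he1 he2 x
  have hJ2 := det2_map_left_of_eigenvectors J (LinearIndependent.pair_symm_iff.mp hind) he2 he1 x
  have hderiv : HasFDerivAt
      (fun y => Real.arctan (spow (det2 y r1) (-l1) * spow (det2 y r2) l2)) _ x :=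
    (((hasFDerivAt_det2_left r1 x).spow (-l1) hx1).mul
      ((hasFDerivAt_det2_left r2 x).spow l2 hx2)).arctan
  refine ⟨hderiv.differentiableAt, ?_⟩
  rw [hderiv.fderiv]
  simp only [smul_apply, add_apply, det2Left_apply, hJ1, hJ2, smul_eq_mul]
  field_simp
  ring

/-- For a source/sink v(x) = Jx with real eigenvalues of one sign
(0 < λ₁ ≤ λ₂ or λ₁ ≤ λ₂ < 0) and linearly independent eigenvectors r₁, r₂,
s(x) = arctan(det(x,r₁)^(−λ₁)·det(x,r₂)^(λ₂)) is differentiable with v(x)ᵀ∇s(x) = 0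
wherever det(x,r₁) ≠ 0 and det(x,r₂) ≠ 0. -/
theorem stmt5 (J : (ℝ × ℝ) →ₗ[ℝ] (ℝ × ℝ)) (l1 l2 : ℝ) (r1 r2 : ℝ × ℝ)
    (hsign : (0 < l1 ∧ l1 ≤ l2) ∨ (l1 ≤ l2 ∧ l2 < 0))
    (hind : LinearIndependent ℝ ![r1, r2])
    (he1 : J r1 = l1 • r1) (he2 : J r2 = l2 • r2)
    (s : ℝ × ℝ → ℝ)
    (hs : ∀ x, s x = Real.arctan (spow (det2 x r1) (-l1) * spow (det2 x r2) l2))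
    (x : ℝ × ℝ) (hx1 : det2 x r1 ≠ 0) (hx2 : det2 x r2 ≠ 0) :
    DifferentiableAt ℝ s x ∧ fderiv ℝ s x (J x) = 0 :=
  stmt5_general J l1 l2 r1 r2 hind he1 he2 s hs x hx1 hx2
end

section
/- Let J ∈ ℝ^{2×2} with complex (non-real) eigenvalues, R the rotation by π/2, Ĵ = ½(RJ + (RJ)ᵀ), α = trace(J), β = √|det Ĵ|, and let v(x) = Jx. Define s(x) = α·arctan( (aᵀx)/(β·bᵀx) ) + β·ln(xᵀĴx) with aᵀ = (1,0)Ĵ and bᵀ = (1,0)R. Then on the open set where bᵀx ≠ 0 and xᵀĴx > 0, s is differentiable and v(x)ᵀ∇s(x) = 0. -/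
/-!
The angle term differentiates like a polar angle: the derivative of `arctan (f / g)` is
`(g f' - f g') / (f² + g²)`. With `f = aᵀx` and `g = β bᵀx`, completing the square and
`β² = det Ĵ` give `f² + g² = -j21 · xᵀĴx`, so along `v` both terms of `∇s` have the
denominator `xᵀĴx`, and their numerators cancel identically in `x`.
-/

open ContinuousLinearMap

theorem HasFDerivAt.arctan_div {E : Type*} [NormedAddCommGroup E] [NormedSpace ℝ E]
    {f g : E → ℝ} {f' g' : E →L[ℝ] ℝ} {x : E}
    (hf : HasFDerivAt f f' x) (hg : HasFDerivAt g g' x) (hgx : g x ≠ 0) :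
    HasFDerivAt (fun y => Real.arctan (f y / g y))
      ((f x ^ 2 + g x ^ 2)⁻¹ • (g x • f' - f x • g')) x := by
  have hdiv : HasFDerivAt (fun y => f y * (g y)⁻¹) (f x • (-(g x ^ 2)⁻¹ • g') + (g x)⁻¹ • f') x :=
    hf.mul ((hasDerivAt_inv hgx).comp_hasFDerivAt x hg)
  convert hdiv.arctan using 1
  · simp only [div_eq_mul_inv]
  · ext w
    simp only [smul_apply, sub_apply, add_apply, smul_eq_mul]
    field_simp
    ring

theorem hasFDerivAt_quadratic (a b c : ℝ) (x : ℝ × ℝ) :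
    HasFDerivAt (fun p : ℝ × ℝ => a * p.1 ^ 2 + b * p.1 * p.2 + c * p.2 ^ 2)
      ((2 * a * x.1 + b * x.2) • fst ℝ ℝ ℝ + (b * x.1 + 2 * c * x.2) • snd ℝ ℝ ℝ) x := by
  have h1 := hasFDerivAt_fst (𝕜 := ℝ) (p := x)
  have h2 := hasFDerivAt_snd (𝕜 := ℝ) (p := x)
  have h := (((h1.pow 2).const_mul a).add ((h1.const_mul b).mul h2)).add ((h2.pow 2).const_mul c)
  refine (h.congr_fderiv ?_).congr_of_eventuallyEq (.of_forall fun p => ?_)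
  · ext <;> simp <;> ring
  · simp only [Pi.add_apply, Pi.mul_apply, mul_assoc]

/-- For v(x) = Jx with non-real eigenvalues (i.e. (tr J)² < 4 det J),
with Ĵ = ½(RJ + (RJ)ᵀ), α = tr J, β = √|det Ĵ|, aᵀ = (1,0)Ĵ, bᵀ = (1,0)R, the field
s(x) = α·arctan((aᵀx)/(β·bᵀx)) + β·ln(xᵀĴx) is differentiable and satisfies
v(x)ᵀ∇s(x) = 0 on the open set where bᵀx ≠ 0 and xᵀĴx > 0.
Here J = [[j11,j12],[j21,j22]], R = [[0,−1],[1,0]], so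
Ĵ = [[−j21, (j11−j22)/2], [(j11−j22)/2, j12]], aᵀx = −j21·x₁ + ((j11−j22)/2)·x₂ and
bᵀx = −x₂. -/
theorem stmt14 (j11 j12 j21 j22 : ℝ)
    (hcmplx : (j11 + j22) ^ 2 - 4 * (j11 * j22 - j12 * j21) < 0)
    (v : ℝ × ℝ → ℝ × ℝ)
    (hv : ∀ x, v x = (j11 * x.1 + j12 * x.2, j21 * x.1 + j22 * x.2))
    (Q ax bx : ℝ × ℝ → ℝ)
    (hQ : ∀ x, Q x = -j21 * x.1 ^ 2 + (j11 - j22) * x.1 * x.2 + j12 * x.2 ^ 2)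
    (hax : ∀ x, ax x = -j21 * x.1 + ((j11 - j22) / 2) * x.2)
    (hbx : ∀ x, bx x = -x.2)
    (α β : ℝ) (hα : α = j11 + j22)
    (hβ : β = Real.sqrt |(-j21) * j12 - ((j11 - j22) / 2) ^ 2|)
    (s : ℝ × ℝ → ℝ)
    (hs : ∀ x, s x = α * Real.arctan (ax x / (β * bx x)) + β * Real.log (Q x))
    (x : ℝ × ℝ) (hbx0 : bx x ≠ 0) (hQ0 : 0 < Q x) :
    DifferentiableAt ℝ s x ∧ fderiv ℝ s x (v x) = 0 := by
  have hdet : 0 < -j21 * j12 - ((j11 - j22) / 2) ^ 2 := by linarith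
  have hβ_pos : 0 < β := hβ ▸ Real.sqrt_pos.2 (abs_pos.2 hdet.ne')
  have hβ_sq : β ^ 2 = -j21 * j12 - ((j11 - j22) / 2) ^ 2 := by
    rw [hβ, Real.sq_sqrt (abs_nonneg _), abs_of_pos hdet]
  have hA : HasFDerivAt ax ((-j21) • fst ℝ ℝ ℝ + ((j11 - j22) / 2) • snd ℝ ℝ ℝ) x :=
    HasFDerivAt.congr_of_eventuallyEq (ContinuousLinearMap.hasFDerivAt _)
      (.of_forall fun p => by simp [hax])
  have hB : HasFDerivAt bx (-snd ℝ ℝ ℝ) x :=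
    HasFDerivAt.congr_of_eventuallyEq (ContinuousLinearMap.hasFDerivAt _)
      (.of_forall fun p => by simp [hbx])
  have hQ' := (hasFDerivAt_quadratic (-j21) (j11 - j22) j12 x).congr_of_eventuallyEq (.of_forall hQ)
  have hS := (((hA.arctan_div (hB.const_mul β) (mul_ne_zero hβ_pos.ne' hbx0)).const_mul α).add
    ((hQ'.log hQ0.ne').const_mul β)).congr_of_eventuallyEq (.of_forall hs)
  refine ⟨hS.differentiableAt, ?_⟩
  have hsum : ax x ^ 2 + (β * bx x) ^ 2 = -j21 * Q x := by
    rw [hax, hbx, hQ]; linear_combination x.2 ^ 2 * hβ_sq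
  have hj21 : j21 ≠ 0 := by
    rintro rfl
    have : 0 < ax x ^ 2 + (β * bx x) ^ 2 := by positivity
    linarith
  rw [hS.fderiv, hsum, hv]
  simp only [add_apply, sub_apply, smul_apply, neg_apply, coe_fst', coe_snd', smul_eq_mul]
  rw [hax, hbx, hα]
  field_simp [hQ0.ne']
  ring
end
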